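/- Let p be an odd prime, and assume D is a p-group and I is nontrivial, with the decomposition I = I_1 × ⋯ × I_s chosen so that every I_l is a nontrivial cyclic group (so s is the p-rank of I). Let ψ : G → \bar{ℚ}_p^× be a group character that is nontrivial on D, let O_ψ = ℤ_p[ψ(G)], and let ψ also denote the induced ring homomorphism ℤ_p[G] → O_ψ. Then the ideal of O_ψ generated by ψ(𝓙) equals the (s−1)-st power of the ideal of O_ψ generated by ψ(𝓘_D): ψ(𝓙)·O_ψ = (ψ(𝓘_D)·O_ψ)^{s−1}. -/

import Mathlib

open MonoidAlgebra Finset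

/-- The sum `ν_H = Σ_{σ ∈ H} σ` of the elements of a subgroup `H` in the group algebra. -/
noncomputable def nuElt (R : Type) [CommRing R] {G : Type} [CommGroup G] [Fintype G]
    (H : Subgroup G) : MonoidAlgebra R G :=
  letI := Classical.decPred (· ∈ H)
  ∑ σ ∈ Finset.univ.filter (· ∈ H), MonoidAlgebra.of R G σ

/-- `I = I_1 × ⋯ × I_s` where `I_l` is the cyclic subgroup generated by `σ l`:
every element of `I` is, in a unique way, the product of elements of the subgroups
`⟨σ l⟩`. -/
def IsDecomp {G : Type} [CommGroup G] (I : Subgroup G) {s : ℕ} (σ : Fin s → G) : Prop :=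
  (∀ l, σ l ∈ I) ∧
    ∀ g ∈ I, ∃! x : ∀ l, Subgroup.zpowers (σ l), (∏ l, ((x l : G))) = g

/-- The ideal `Z_i ⊆ R[G]` generated by the products `ν_{l_1} ⋯ ν_{l_{s-i}}` over all
`(s-i)`-element subsets `{l_1 < ⋯ < l_{s-i}}` of `{1, …, s}`. -/
noncomputable def ZidealR (R : Type) [CommRing R] {G : Type} [CommGroup G] [Fintype G]
    {s : ℕ} (σ : Fin s → G) (i : ℕ) : Ideal (MonoidAlgebra R G) :=
  Ideal.span {x | ∃ T : Finset (Fin s), T.card = s - i ∧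
    x = ∏ l ∈ T, nuElt R (Subgroup.zpowers (σ l))}

/-- The ideal `𝓘_H = ker(R[G] → R[G/H])`. -/
noncomputable def kerIdealR (R : Type) [CommRing R] {G : Type} [CommGroup G] [Fintype G]
    (H : Subgroup G) : Ideal (MonoidAlgebra R G) :=
  RingHom.ker (MonoidAlgebra.mapDomainRingHom R (QuotientGroup.mk' H))

/-!
Write `K = ψ(𝓘_D)·O_ψ`; it contains `ψ(d) - 1` for every `d ∈ D`. As `ψ` is nontrivial on the
`p`-group `D`, it takes on `D` a value `ζ` of order `p`, and `p = Σ_{j<p} (1 - ζ^j) ∈ K`.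
The image of `ν_l` is the sum of the character `ψ` over the cyclic group `I_l`: it vanishes when
`ψ` is nontrivial on `I_l` and equals `|I_l|`, a multiple of `p`, otherwise, so it lies in `K`.
Hence `ψ(Z_i)·O_ψ ⊆ K^(s-i)`, and every summand `Z_i 𝓘_D^(i-1)` of `𝓙` maps into `K^(s-1)`.
Conversely `Z_s` is the whole ring (it is generated by the empty product), so `𝓘_D^(s-1) ⊆ 𝓙`.
-/

theorem natCast_mem_span_sub_one_of_pow_eq_one {O : Type*} [CommRing O] [IsDomain O]
    {u : O} {n : ℕ} (hun : u ^ n = 1) (hu : u ≠ 1) : (n : O) ∈ Ideal.span {u - 1} := by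
  have hgeom : ∑ j ∈ range n, u ^ j = 0 := by
    have h := geom_sum_mul u n
    rw [hun, sub_self] at h
    exact (mul_eq_zero.1 h).resolve_right (sub_ne_zero.2 hu)
  have hn : (n : O) = -∑ j ∈ range n, (u ^ j - 1) := by
    simp [Finset.sum_sub_distrib, hgeom]
  rw [hn]
  exact neg_mem <| Ideal.sum_mem _ fun j _ =>
    Ideal.mem_span_singleton.2 (sub_one_dvd_pow_sub_one u j)

theorem IsPGroup.exists_mem_orderOf_map_eq {p : ℕ} [Fact p.Prime] {G M : Type*} [Group G]
    [Group M] [Finite G] {D : Subgroup G} (hD : IsPGroup p D) (ψ : G →* M)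
    (hψ : ∃ d ∈ D, ψ d ≠ 1) : ∃ d ∈ D, orderOf (ψ d) = p := by
  obtain ⟨d₀, hd₀, hψd₀⟩ := hψ
  have hne : Nat.card (D.map ψ) ≠ 1 := by
    intro h
    have hmem := Subgroup.mem_map_of_mem ψ hd₀
    rw [Subgroup.card_eq_one.1 h, Subgroup.mem_bot] at hmem
    exact hψd₀ hmem
  have : Finite (D.map ψ) := Finite.Set.finite_image (D : Set G) ψ
  obtain ⟨x, hx⟩ :=
    exists_prime_orderOf_dvd_card' p ((hD.map ψ).card_eq_or_dvd.resolve_left hne)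
  obtain ⟨d, hd, hdx⟩ := Subgroup.mem_map.1 x.2
  exact ⟨d, hd, by rw [hdx, Subgroup.orderOf_coe, hx]⟩

theorem IsPGroup.prime_dvd_card_zpowers {p : ℕ} [Fact p.Prime] {G : Type*} [Group G]
    {D : Subgroup G} (hD : IsPGroup p D) {g : G} (hg : g ∈ D) (hg1 : g ≠ 1) :
    p ∣ Nat.card (Subgroup.zpowers g) := by
  refine (hD.to_le ((Subgroup.zpowers_le).2 hg)).card_eq_or_dvd.resolve_left fun h => hg1 ?_
  exact Subgroup.zpowers_eq_bot.1 (Subgroup.card_eq_one.1 h)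

theorem map_sum_mul_pow_eq_pow {A B : Type*} [CommSemiring A] [CommSemiring B] (f : A →+* B)
    (Z : ℕ → Ideal A) (J : Ideal A) {s : ℕ} (hs : s ≠ 0)
    (hZ : ∀ i < s, (Z (i + 1)).map f ≤ J.map f ^ (s - (i + 1))) (hZs : Z s = ⊤) :
    (∑ i ∈ range s, Z (i + 1) * J ^ i).map f = J.map f ^ (s - 1) := by
  refine le_antisymm ?_ ?_
  · rw [Ideal.map_le_iff_le_comap, Ideal.sum_eq_sup]
    refine Finset.sup_le fun i hi => Ideal.map_le_iff_le_comap.1 ?_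
    have hi : i < s := mem_range.1 hi
    calc (Z (i + 1) * J ^ i).map f = (Z (i + 1)).map f * J.map f ^ i := by
          rw [Ideal.map_mul, Ideal.map_pow]
      _ ≤ J.map f ^ (s - (i + 1)) * J.map f ^ i := Ideal.mul_mono_left (hZ i hi)
      _ = J.map f ^ (s - 1) := by rw [← pow_add]; congr 1; omega
  · have hlast : J ^ (s - 1) = Z (s - 1 + 1) * J ^ (s - 1) := by
      rw [Nat.sub_add_cancel (Nat.one_le_iff_ne_zero.2 hs), hZs, Ideal.top_mul]
    rw [← Ideal.map_pow, hlast]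
    exact Ideal.map_mono <| Finset.single_le_sum (f := fun i => Z (i + 1) * J ^ i)
      (fun _ _ => zero_le) (mem_range.2 (by omega))

theorem IsDecomp.ne_zero_of_ne_bot {G : Type} [CommGroup G] {I : Subgroup G} {s : ℕ}
    {σ : Fin s → G} (hdec : IsDecomp I σ) (hI : I ≠ ⊥) : s ≠ 0 := by
  rintro rfl
  obtain ⟨a, ha⟩ := Subgroup.ne_bot_iff_exists_ne_one.1 hI
  obtain ⟨x, hx, -⟩ := hdec.2 a a.2
  exact ha (Subtype.ext hx.symm)

section GroupAlgebra

variable {R : Type} [CommRing R] {G : Type} [CommGroup G] [Fintype G]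

theorem of_sub_one_mem_kerIdealR {H : Subgroup G} {d : G} (hd : d ∈ H) :
    MonoidAlgebra.of R G d - 1 ∈ kerIdealR R H := by
  have h : (d : G ⧸ H) = 1 := (QuotientGroup.eq_one_iff d).2 hd
  rw [kerIdealR, RingHom.mem_ker, map_sub, map_one]
  simp [MonoidAlgebra.of_apply, MonoidAlgebra.mapDomainRingHom, h, MonoidAlgebra.one_def]

theorem map_of_sub_one_mem_map_kerIdealR {B F : Type*} [CommRing B]
    [FunLike F (MonoidAlgebra R G) B] [RingHomClass F (MonoidAlgebra R G) B]
    (f : F) {H : Subgroup G} {d : G} (hd : d ∈ H) :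
    f (MonoidAlgebra.of R G d) - 1 ∈ (kerIdealR R H).map f := by
  have hker : MonoidAlgebra.of R G d - 1 ∈ kerIdealR R H := of_sub_one_mem_kerIdealR hd
  simpa using Ideal.mem_map_of_mem f hker

theorem lift_nuElt {O : Type*} [Semiring O] [Algebra R O] (χ : G →* O) (H : Subgroup G)
    [Fintype H] :
    MonoidAlgebra.lift R O G χ (nuElt R H) = ∑ h : H, χ h := by
  rw [nuElt, map_sum]
  simp only [MonoidAlgebra.lift_of]
  exact Finset.sum_subtype _ (by simp) _

theorem lift_nuElt_mem_span_natCard {O : Type*} [CommRing O] [IsDomain O] [Algebra R O]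
    (χ : G →* O) (H : Subgroup G) :
    MonoidAlgebra.lift R O G χ (nuElt R H) ∈ Ideal.span {(Nat.card H : O)} := by
  have := Fintype.ofFinite H
  rw [lift_nuElt]
  by_cases hχ : χ.comp H.subtype = 1
  · have h1 : ∀ h : H, χ h = 1 := fun h => DFunLike.congr_fun hχ h
    simp [h1]
  · rw [show ∑ h : H, χ h = 0 from sum_hom_units_eq_zero _ hχ]
    exact zero_mem _

theorem ZidealR_self {s : ℕ} (σ : Fin s → G) : ZidealR R σ s = ⊤ :=
  (Ideal.eq_top_iff_one _).2 <| Ideal.subset_span ⟨∅, by simp, by simp⟩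

theorem map_ZidealR_le_pow {B F : Type*} [CommRing B] [FunLike F (MonoidAlgebra R G) B]
    [RingHomClass F (MonoidAlgebra R G) B] (f : F) (K : Ideal B) {s : ℕ} (σ : Fin s → G)
    (hν : ∀ l, f (nuElt R (Subgroup.zpowers (σ l))) ∈ K) (i : ℕ) :
    (ZidealR R σ i).map f ≤ K ^ (s - i) := by
  rw [ZidealR, Ideal.map_span, Ideal.span_le]
  rintro _ ⟨_, ⟨T, hT, rfl⟩, rfl⟩
  rw [map_prod, ← hT, ← Finset.prod_const]
  exact Ideal.prod_mem_prod fun l _ => hν l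

theorem natCast_mem_map_lift_kerIdealR {p : ℕ} [Fact p.Prime] {O : Type*} [CommRing O]
    [IsDomain O] [Algebra R O] (ψ : G →* Oˣ) {D : Subgroup G} (hD : IsPGroup p D)
    (hψ : ∃ d ∈ D, ψ d ≠ 1) :
    (p : O) ∈ (kerIdealR R D).map (MonoidAlgebra.lift R O G ((Units.coeHom O).comp ψ)) := by
  obtain ⟨d, hd, hord⟩ := hD.exists_mem_orderOf_map_eq ψ hψ
  have hpow : (ψ d : O) ^ p = 1 := by
    rw [← Units.val_pow_eq_pow_val, ← hord, pow_orderOf_eq_one, Units.val_one]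
  have hne : (ψ d : O) ≠ 1 := by
    rw [Ne, Units.val_eq_one, ← orderOf_eq_one_iff, hord]
    exact (Fact.out : p.Prime).ne_one
  have hsub := map_of_sub_one_mem_map_kerIdealR
    (MonoidAlgebra.lift R O G ((Units.coeHom O).comp ψ)) hd
  refine (Ideal.span_singleton_le_iff_mem _).2 ?_ (natCast_mem_span_sub_one_of_pow_eq_one hpow hne)
  simpa using hsub

end GroupAlgebra

theorem statement17_general (p : ℕ) [Fact p.Prime]
    {G : Type} [CommGroup G] [Fintype G] (I D : Subgroup G) (hID : I ≤ D)
    (hD : IsPGroup p ↥D) (hInontriv : I ≠ ⊥)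
    {s : ℕ} (σ : Fin s → G) (hdec : IsDecomp I σ) (hnt : ∀ l, σ l ≠ 1)
    (O : Type) [CommRing O] [IsDomain O] [Algebra ℤ_[p] O]
    (ψ : G →* Oˣ) (hψD : ∃ d ∈ D, ψ d ≠ 1) :
    Ideal.map (MonoidAlgebra.lift ℤ_[p] O G ((Units.coeHom O).comp ψ)).toRingHom
        (∑ i ∈ Finset.range s, ZidealR ℤ_[p] σ (i + 1) * (kerIdealR ℤ_[p] D) ^ i)
      = (Ideal.map (MonoidAlgebra.lift ℤ_[p] O G ((Units.coeHom O).comp ψ)).toRingHom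
          (kerIdealR ℤ_[p] D)) ^ (s - 1) := by
  set χ := (MonoidAlgebra.lift ℤ_[p] O G ((Units.coeHom O).comp ψ)).toRingHom
  set K := (kerIdealR ℤ_[p] D).map χ
  have hpK : (p : O) ∈ K := natCast_mem_map_lift_kerIdealR ψ hD hψD
  have hν : ∀ l, χ (nuElt ℤ_[p] (Subgroup.zpowers (σ l))) ∈ K := by
    intro l
    have hcard : Ideal.span {(Nat.card (Subgroup.zpowers (σ l)) : O)} ≤ K :=
      (Ideal.span_singleton_le_span_singleton.2 <| Nat.cast_dvd_cast <|
        hD.prime_dvd_card_zpowers (hID (hdec.1 l)) (hnt l)).trans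
      ((Ideal.span_singleton_le_iff_mem _).2 hpK)
    exact hcard (lift_nuElt_mem_span_natCard _ _)
  exact map_sum_mul_pow_eq_pow _ _ _ (hdec.ne_zero_of_ne_bot hInontriv)
    (fun i _ => map_ZidealR_le_pow _ _ σ hν (i + 1)) (ZidealR_self σ)

/-- for `p` an odd prime, `D` a `p`-group, `I` nontrivial with a
decomposition `I = I_1 × ⋯ × I_s` into nontrivial cyclic subgroups (`s` the `p`-rank of
`I`), and `ψ` a character of `G`, nontrivial on `D`, with values in (the units of) the
domain `O_ψ = ℤ_p[ψ(G)]`, one has `ψ(𝓙)·O_ψ = (ψ(𝓘_D)·O_ψ)^{s−1}`, where `ψ` also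
denotes the induced ring homomorphism `ℤ_p[G] → O_ψ`. -/
theorem statement17 (p : ℕ) [Fact p.Prime] (hp2 : p ≠ 2)
    {G : Type} [CommGroup G] [Fintype G] (I D : Subgroup G) (hID : I ≤ D)
    (φt : G) (hφt : φt ∈ D) (hφgen : ∀ d ∈ D, ∃ n : ℤ, φt ^ n * d⁻¹ ∈ I)
    (hD : IsPGroup p ↥D) (hInontriv : I ≠ ⊥)
    {s : ℕ} (σ : Fin s → G) (hdec : IsDecomp I σ) (hnt : ∀ l, σ l ≠ 1)
    (O : Type) [CommRing O] [IsDomain O] [Algebra ℤ_[p] O]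
    (ψ : G →* Oˣ) (hψD : ∃ d ∈ D, ψ d ≠ 1)
    (hadj : Algebra.adjoin ℤ_[p] (Set.range fun g : G => ((ψ g : Oˣ) : O)) = ⊤) :
    Ideal.map (MonoidAlgebra.lift ℤ_[p] O G ((Units.coeHom O).comp ψ)).toRingHom
        (∑ i ∈ Finset.range s, ZidealR ℤ_[p] σ (i + 1) * (kerIdealR ℤ_[p] D) ^ i)
      = (Ideal.map (MonoidAlgebra.lift ℤ_[p] O G ((Units.coeHom O).comp ψ)).toRingHom
          (kerIdealR ℤ_[p] D)) ^ (s - 1) :=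
  statement17_general p I D hID hD hInontriv σ hdec hnt O ψ hψD
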